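/- Let n ≥ 1 and let ⟨Y; ≤, g, rank, T⟩ be a topological structure satisfying conditions (B1)–(B6). Then the multi-sorted topological structure G(Y), with sorts X_k := rank⁻¹(k) (k ∈ {0,…,n}, subspace topologies), operations g_k := g restricted to X_k mapping into X₀ (k ∈ {1,…,n}), and relations ≤ᵏ := ≤ ∩ (X_k × X_k) (k ∈ {0,…,n}) and ≤ʲᵏ := ≤ ∩ (X_j × X_k) (1 ≤ j < k ≤ n), satisfies axioms (A1)–(A7). -/

import Mathlib

/-!
STATEMENT 7: Let n ≥ 1 and let ⟨Y; ≤, g, rank, T⟩ be a topological structure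
satisfying conditions (B1)–(B6).  Then the multi-sorted topological structure
G(Y), with sorts X_k := rank⁻¹(k) (k ∈ {0,…,n}, subspace topologies), operations
g_k := g restricted to X_k mapping into X₀ (k ∈ {1,…,n}), and relations
≤ᵏ := ≤ ∩ (X_k × X_k) (k ∈ {0,…,n}) and ≤ʲᵏ := ≤ ∩ (X_j × X_k) (1 ≤ j < k ≤ n),
satisfies axioms (A1)–(A7).  (In our presentation G(Y) is given by the carrier Y
with sort map rank, combined operation g and combined relation GRel le rank; being
a multi-sorted topological structure in the signature is the condition `IsMS`.)
-/

namespace ExpandingBelnap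
/-! ### Multi-sorted topological structures in the signature of the alter ego `M̃ₙ`

A multi-sorted topological structure `X = ⟨X₀ ⊔ ⋯ ⊔ Xₙ; {g_k}, {≤ᵏ}, {≤ʲᵏ}, T⟩` is
presented by a single carrier `C` (the disjoint union), a `sort` map `C → Fin (n+1)`
(each sort being clopen, which encodes the disjoint-union topology), a combined
operation `g : C → C` (equal to `g_k` on the sort-`k` part for `k ≥ 1` and to the
identity on the sort-`0` part), and a combined relation `r : C → C → Prop`
(equal to `≤ᵏ` on pairs within sort `k` and to `≤ʲᵏ` on pairs from sort `j` to
sort `k` for `1 ≤ j < k`, and empty on all other pairs of sorts). -/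

/-- `U` is an up-set for the relation `r`. -/
def IsUpset {C : Type} (r : C → C → Prop) (U : Set C) : Prop :=
  ∀ x ∈ U, ∀ y, r x y → y ∈ U

/-- `⟨C; r, T⟩` is a Priestley space: `r` is a partial order and the space is
compact and totally order-disconnected. -/
def IsPriestley (C : Type) [TopologicalSpace C] (r : C → C → Prop) : Prop :=
  (∀ x, r x x) ∧ (∀ x y, r x y → r y x → x = y) ∧
    (∀ x y z, r x y → r y z → r x z) ∧ CompactSpace C ∧
    ∀ x y, ¬ r x y → ∃ U : Set C, IsClopen U ∧ IsUpset r U ∧ x ∈ U ∧ y ∉ U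

/-- `(C, sort, g, r)` presents a multi-sorted topological structure in the signature
of `M̃ₙ`: the sorts are clopen (disjoint-union topology), `g` maps into sort `0` and
restricts to the identity on sort `0`, and the relation only relates pairs within a
sort or from sort `j` to sort `k` where `1 ≤ j < k`. -/
def IsMS {n : ℕ} {C : Type} [TopologicalSpace C]
    (sort : C → Fin (n + 1)) (g : C → C) (r : C → C → Prop) : Prop :=
  (∀ k, IsClopen {x | sort x = k}) ∧
    (∀ x, sort (g x) = 0) ∧
    (∀ x, sort x = 0 → g x = x) ∧
    (∀ x y, r x y → sort x = sort y ∨ (0 < (sort x).val ∧ (sort x).val < (sort y).val))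

/-- (A1): each `g_k : X_k → X₀` is continuous (`k ∈ [1, n]`). -/
def AxA1 {n : ℕ} {C : Type} [TopologicalSpace C]
    (sort : C → Fin (n + 1)) (g : C → C) : Prop :=
  ∀ k : Fin (n + 1), 0 < k.val → Continuous fun x : {x : C // sort x = k} => g x.1

/-- (A2): for `k ∈ [1, n]` and `x, y ∈ X_k`, `x ≤ᵏ y` implies `g_k x = g_k y`. -/
def AxA2 {n : ℕ} {C : Type}
    (sort : C → Fin (n + 1)) (g : C → C) (r : C → C → Prop) : Prop :=
  ∀ x y, sort x = sort y → 0 < (sort x).val → r x y → g x = g y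

/-- (A3): for `1 ≤ j < k`, `x ∈ X_j`, `y ∈ X_k`, `x ≤ʲᵏ y` implies `g_j x = g_k y`. -/
def AxA3 {n : ℕ} {C : Type}
    (sort : C → Fin (n + 1)) (g : C → C) (r : C → C → Prop) : Prop :=
  ∀ x y, 0 < (sort x).val → (sort x).val < (sort y).val → r x y → g x = g y

/-- (A4): for `1 ≤ j < k`, `x, y ∈ X_j`, `u, v ∈ X_k`:
`x ≤ʲ y`, `y ≤ʲᵏ u`, `u ≤ᵏ v` imply `x ≤ʲᵏ v`. -/
def AxA4 {n : ℕ} {C : Type} (sort : C → Fin (n + 1)) (r : C → C → Prop) : Prop :=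
  ∀ x y u v, 0 < (sort x).val → sort x = sort y → (sort y).val < (sort u).val →
    sort u = sort v → r x y → r y u → r u v → r x v

/-- (A5): for `1 ≤ j < k < l`, `x ∈ X_j`, `y ∈ X_k`, `z ∈ X_l`:
`x ≤ʲᵏ y` and `y ≤ᵏˡ z` imply `x ≤ʲˡ z`. -/
def AxA5 {n : ℕ} {C : Type} (sort : C → Fin (n + 1)) (r : C → C → Prop) : Prop :=
  ∀ x y z, 0 < (sort x).val → (sort x).val < (sort y).val →
    (sort y).val < (sort z).val → r x y → r y z → r x z

/-- (A6): each `⟨X_k; ≤ᵏ, T_k⟩` is a Priestley space (`k ∈ [0, n]`). -/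
def AxA6 {n : ℕ} {C : Type} [TopologicalSpace C]
    (sort : C → Fin (n + 1)) (r : C → C → Prop) : Prop :=
  ∀ k : Fin (n + 1), IsPriestley {x : C // sort x = k} fun a b => r a.1 b.1

/-- `U j, …, U k` is a mutually increasing family: each `U l` is a subset of `X_l`,
each `U l` is an up-set of `⟨X_l; ≤ˡ⟩`, and for `max(1,j) ≤ i ≤ l ≤ k`,
`x ∈ U i`, `y ∈ X_l` and `x ≤ⁱˡ y` imply `y ∈ U l`. -/
def MutInc {n : ℕ} {C : Type} (sort : C → Fin (n + 1)) (r : C → C → Prop)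
    (j k : Fin (n + 1)) (U : Fin (n + 1) → Set C) : Prop :=
  (∀ l, j ≤ l → l ≤ k → U l ⊆ {x | sort x = l}) ∧
    ∀ i l, j ≤ i → i ≤ l → l ≤ k → (i = l ∨ 0 < i.val) →
      ∀ x ∈ U i, ∀ y, sort y = l → r x y → y ∈ U l

/-- `U` is a clopen subset of the sort-`l` subspace `⟨X_l; T_l⟩`. -/
def ClopenSort {n : ℕ} {C : Type} [TopologicalSpace C]
    (sort : C → Fin (n + 1)) (l : Fin (n + 1)) (U : Set C) : Prop :=
  IsClopen {z : {x : C // sort x = l} | z.1 ∈ U}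

/-- (A7): for `1 ≤ j < k`, `x ∈ X_j`, `y ∈ X_k` with `x ≰ʲᵏ y`, there is a mutually
increasing family of clopen up-sets `U j, …, U k` with `x ∈ U j` and `y ∉ U k`. -/
def AxA7 {n : ℕ} {C : Type} [TopologicalSpace C]
    (sort : C → Fin (n + 1)) (r : C → C → Prop) : Prop :=
  ∀ j k : Fin (n + 1), 0 < j.val → j < k → ∀ x y, sort x = j → sort y = k → ¬ r x y →
    ∃ U : Fin (n + 1) → Set C, MutInc sort r j k U ∧
      (∀ l, j ≤ l → l ≤ k → ClopenSort sort l (U l)) ∧ x ∈ U j ∧ y ∉ U k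

/-- The conjunction of axioms (A1)–(A7). -/
def AxiomsA {n : ℕ} {C : Type} [TopologicalSpace C]
    (sort : C → Fin (n + 1)) (g : C → C) (r : C → C → Prop) : Prop :=
  AxA1 sort g ∧ AxA2 sort g r ∧ AxA3 sort g r ∧ AxA4 sort r ∧ AxA5 sort r ∧
    AxA6 sort r ∧ AxA7 sort r
/-! ### The conditions (B1)–(B6)

These concern single-sorted structures `⟨Y; ≤, g, rank, T⟩`, where `Y` is a
topological space, `le : Y → Y → Prop`, `g : Y → Y` and `rank : Y → Fin (n+1)`
(here `Fin (n+1)` carries its usual linear order and the discrete topology). -/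

/-- (B1): `⟨Y; ≤, T⟩` is a Priestley space. -/
def CondB1 {Y : Type} [TopologicalSpace Y] (le : Y → Y → Prop) : Prop :=
  IsPriestley Y le

/-- (B2): `g` is a continuous retraction. -/
def CondB2 {Y : Type} [TopologicalSpace Y] (g : Y → Y) : Prop :=
  Continuous g ∧ ∀ x, g (g x) = g x

/-- (B3): `x ≤ y` implies `g x = g y`, for all `x, y ∈ Y`. -/
def CondB3 {Y : Type} (le : Y → Y → Prop) (g : Y → Y) : Prop :=
  ∀ x y, le x y → g x = g y

/-- (B4): `g(Y)` is a union of connected components of the comparability graph of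
`⟨Y; ≤⟩`: it is closed under reachability along comparability. -/
def CondB4 {Y : Type} (le : Y → Y → Prop) (g : Y → Y) : Prop :=
  ∀ x y, x ∈ Set.range g →
    Relation.ReflTransGen (fun a b => le a b ∨ le b a) x y → y ∈ Set.range g

/-- (B5): `rank : Y → [0, n]` is continuous and order-preserving. -/
def CondB5 {n : ℕ} {Y : Type} [TopologicalSpace Y]
    (le : Y → Y → Prop) (rank : Y → Fin (n + 1)) : Prop :=
  Continuous rank ∧ ∀ x y, le x y → rank x ≤ rank y

/-- (B6): `g(Y) = rank⁻¹(0)`. -/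
def CondB6 {n : ℕ} {Y : Type} (g : Y → Y) (rank : Y → Fin (n + 1)) : Prop :=
  Set.range g = {x | rank x = 0}

/-- The combined relation of the multi-sorted structure `G(Y)`: its relations are
`≤ᵏ := ≤ ∩ (X_k × X_k)` for `k ∈ [0, n]` and `≤ʲᵏ := ≤ ∩ (X_j × X_k)` for
`1 ≤ j < k ≤ n`, where `X_k := rank⁻¹(k)`. -/
def GRel {n : ℕ} {Y : Type} (le : Y → Y → Prop) (rank : Y → Fin (n + 1)) :
    Y → Y → Prop := fun x y =>
  le x y ∧ (rank x = rank y ∨ (0 < (rank x).val ∧ (rank x).val < (rank y).val))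

/-!
Every relation of `G(Y)` is a restriction of `≤` and every sort `rank⁻¹(k)` is clopen, so the
Priestley axioms pass from `Y` to each sort; for (A7), a clopen up-set of `Y` separating `x`
from `y`, cut down to the sorts, is already a mutually increasing separating family.
-/

theorem IsUpset.preimage_val {C : Type} {r : C → C → Prop} {U : Set C} (hU : IsUpset r U)
    (p : C → Prop) : IsUpset (fun a b : {x // p x} => r a.1 b.1) (Subtype.val ⁻¹' U) :=
  fun a ha b hab => hU a.1 ha b.1 hab

theorem IsUpset.mono {C : Type} {r s : C → C → Prop} {U : Set C} (hU : IsUpset r U)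
    (hsr : ∀ x y, s x y → r x y) : IsUpset s U :=
  fun x hx y hxy => hU x hx y (hsr x y hxy)

theorem IsPriestley.subtype {C : Type} [TopologicalSpace C] {r : C → C → Prop}
    (h : IsPriestley C r) {p : C → Prop} (hp : IsClosed {x | p x}) :
    IsPriestley {x // p x} fun a b => r a.1 b.1 := by
  obtain ⟨hrefl, hanti, htrans, hcomp, hsep⟩ := h
  refine ⟨fun a => hrefl a.1, fun a b hab hba => Subtype.ext (hanti _ _ hab hba),
    fun a b c => htrans a.1 b.1 c.1, isCompact_iff_compactSpace.mp hp.isCompact, ?_⟩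
  intro a b hab
  obtain ⟨U, hUc, hUu, haU, hbU⟩ := hsep a.1 b.1 hab
  exact ⟨Subtype.val ⁻¹' U, hUc.preimage continuous_subtype_val, hUu.preimage_val p, haU, hbU⟩

section Sorted

variable {n : ℕ} {C : Type} (sort : C → Fin (n + 1))

theorem isClopen_sort_eq [TopologicalSpace C] (hsort : Continuous sort) (k : Fin (n + 1)) :
    IsClopen {x | sort x = k} :=
  (isClopen_discrete {k}).preimage hsort

theorem axA1_of_continuous [TopologicalSpace C] {g : C → C} (hg : Continuous g) :
    AxA1 sort g :=
  fun _ _ => hg.comp continuous_subtype_val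

theorem mutInc_inter_sort {r : C → C → Prop} {U : Set C} (hU : IsUpset r U)
    (j k : Fin (n + 1)) : MutInc sort r j k fun l => U ∩ {x | sort x = l} :=
  ⟨fun _ _ _ => Set.inter_subset_right,
    fun _ _ _ _ _ _ x hx y hy hxy => ⟨hU x hx.1 y hxy, hy⟩⟩

theorem clopenSort_inter_sort [TopologicalSpace C] {U : Set C} (hU : IsClopen U)
    (l : Fin (n + 1)) : ClopenSort sort l (U ∩ {x | sort x = l}) := by
  have hcut : {z : {x // sort x = l} | z.1 ∈ U ∩ {x | sort x = l}} = Subtype.val ⁻¹' U :=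
    Set.ext fun z => and_iff_left z.2
  rw [ClopenSort, hcut]
  exact hU.preimage continuous_subtype_val

end Sorted

section GRel

variable {n : ℕ} {Y : Type} {le : Y → Y → Prop} {g : Y → Y} {rank : Y → Fin (n + 1)}

theorem gRel_iff_of_rank_eq {x y : Y} (hxy : rank x = rank y) : GRel le rank x y ↔ le x y :=
  ⟨And.left, fun h => ⟨h, Or.inl hxy⟩⟩

theorem gRel_iff_of_rank_lt {x y : Y} (hx : 0 < (rank x).val) (hxy : rank x < rank y) :
    GRel le rank x y ↔ le x y :=
  ⟨And.left, fun h => ⟨h, Or.inr ⟨hx, hxy⟩⟩⟩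

theorem isMS_gRel [TopologicalSpace Y] (hrank : Continuous rank) (hgg : ∀ x, g (g x) = g x)
    (h6 : CondB6 g rank) : IsMS rank g (GRel le rank) := by
  refine ⟨isClopen_sort_eq rank hrank, fun x => ?_, fun x hx => ?_, fun _ _ h => h.2⟩
  · exact h6.subset ⟨x, rfl⟩
  · obtain ⟨y, rfl⟩ := h6.symm.subset hx
    exact hgg y

theorem axA2_gRel (h3 : CondB3 le g) : AxA2 rank g (GRel le rank) :=
  fun x y _ _ h => h3 x y h.1

theorem axA3_gRel (h3 : CondB3 le g) : AxA3 rank g (GRel le rank) :=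
  fun x y _ _ h => h3 x y h.1

theorem axA4_gRel (htrans : ∀ x y z, le x y → le y z → le x z) : AxA4 rank (GRel le rank) := by
  intro x y u v hx hxy hyu huv rxy ryu ruv
  refine (gRel_iff_of_rank_lt hx ?_).2 (htrans _ _ _ (htrans _ _ _ rxy.1 ryu.1) ruv.1)
  rw [hxy, ← huv]
  exact hyu

theorem axA5_gRel (htrans : ∀ x y z, le x y → le y z → le x z) : AxA5 rank (GRel le rank) :=
  fun _ _ _ hx hxy hyz rxy ryz =>
    (gRel_iff_of_rank_lt hx (hxy.trans hyz)).2 (htrans _ _ _ rxy.1 ryz.1)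

theorem axA6_gRel [TopologicalSpace Y] (h1 : CondB1 le) (hrank : Continuous rank) :
    AxA6 rank (GRel le rank) := by
  intro k
  have hrel : (fun a b : {x // rank x = k} => GRel le rank a.1 b.1) = fun a b => le a.1 b.1 :=
    funext₂ fun a b => propext (gRel_iff_of_rank_eq (a.2.trans b.2.symm))
  rw [hrel]
  exact h1.subtype (isClopen_sort_eq rank hrank k).isClosed

theorem axA7_gRel [TopologicalSpace Y] (h1 : CondB1 le) : AxA7 rank (GRel le rank) := by
  intro j k hj hjk x y hx hy hxy
  have hle : ¬ le x y := fun h => hxy <| (gRel_iff_of_rank_lt (hx ▸ hj) (hx ▸ hy ▸ hjk)).2 h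
  obtain ⟨U, hUc, hUu, hxU, hyU⟩ := h1.2.2.2.2 x y hle
  exact ⟨fun l => U ∩ {z | rank z = l}, mutInc_inter_sort rank (hUu.mono fun _ _ => And.left) j k,
    fun l _ _ => clopenSort_inter_sort rank hUc l, ⟨hxU, hx⟩, fun h => hyU h.1⟩

end GRel

theorem statement7_general (n : ℕ) (Y : Type) [TopologicalSpace Y]
    (le : Y → Y → Prop) (g : Y → Y) (rank : Y → Fin (n + 1))
    (h1 : CondB1 le) (h2 : CondB2 g) (h3 : CondB3 le g)
    (h5 : CondB5 le rank) (h6 : CondB6 g rank) :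
    IsMS rank g (GRel le rank) ∧ AxiomsA rank g (GRel le rank) :=
  ⟨isMS_gRel h5.1 h2.2 h6, axA1_of_continuous rank h2.1, axA2_gRel h3, axA3_gRel h3,
    axA4_gRel h1.2.2.1, axA5_gRel h1.2.2.1, axA6_gRel h1 h5.1, axA7_gRel h1⟩

theorem statement7 (n : ℕ) (hn : 1 ≤ n) (Y : Type) [TopologicalSpace Y]
    (le : Y → Y → Prop) (g : Y → Y) (rank : Y → Fin (n + 1))
    (h1 : CondB1 le) (h2 : CondB2 g) (h3 : CondB3 le g) (h4 : CondB4 le g)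
    (h5 : CondB5 le rank) (h6 : CondB6 g rank) :
    IsMS rank g (GRel le rank) ∧ AxiomsA rank g (GRel le rank) :=
  statement7_general n Y le g rank h1 h2 h3 h5 h6

end ExpandingBelnap
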